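/- arXiv:1802.03587 — 2 statements merged into one kernel-verified Lean document; each statement's English description precedes it below -/
import Mathlib

section
/- Let H = (V, E, ω) be a hypergraph with distinct vertices s, t ∈ V and let N_L be its Lawler network. For every (s,t)-cut (𝒮, 𝒱∖𝒮) of N_L of finite capacity, setting S := 𝒮 ∩ V, the capacity of the cut is at least the cut weight of the bipartition (S, V∖S) of H, i.e., at least Σ{ω(e) : e ∈ E, e ∩ S ≠ ∅ and e ∖ S ≠ ∅}. Moreover, for every net e split by S, the bridging edge (e′, e″) is a cut edge, i.e., e′ ∈ 𝒮 and e″ ∉ 𝒮. -/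
open scoped ENNReal

/-- Capacities of the Lawler network of a hypergraph: nodes are the hypernodes
(`Sum.inl`) together with two bridging nodes per net (`Sum.inr (e, false)` is `e′`,
`Sum.inr (e, true)` is `e″`). -/
noncomputable def lawlerCap {V E : Type} [DecidableEq V] [DecidableEq E]
    (pins : E → Finset V) (ω : E → ℝ) :
    V ⊕ E × Bool → V ⊕ E × Bool → ℝ≥0∞
  | Sum.inl p, Sum.inr (e, false) => if p ∈ pins e then ⊤ else 0
  | Sum.inr (e, false), Sum.inr (e', true) => if e = e' then ENNReal.ofReal (ω e) else 0
  | Sum.inr (e, true), Sum.inl p => if p ∈ pins e then ⊤ else 0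
  | _, _ => 0

/-- `f` is an `(s,t)`-flow for the capacity function `c`. -/
def IsFlow {ν : Type} [Fintype ν] (c : ν → ν → ℝ≥0∞) (s t : ν) (f : ν → ν → ℝ) : Prop :=
  (∀ u v, (f u v : EReal) ≤ (c u v : EReal)) ∧
  (∀ u v, f u v = - f v u) ∧
  (∀ u, u ≠ s → u ≠ t → ∑ v, f u v = 0)

/-- The value of a flow. -/
noncomputable def flowValue {ν : Type} [Fintype ν] (f : ν → ν → ℝ) (s : ν) : ℝ :=
  ∑ v, f s v

/-- `f` is a maximum `(s,t)`-flow. -/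
def IsMaxFlow {ν : Type} [Fintype ν] (c : ν → ν → ℝ≥0∞) (s t : ν) (f : ν → ν → ℝ) : Prop :=
  IsFlow c s t f ∧ ∀ g, IsFlow c s t g → flowValue g s ≤ flowValue f s

/-- `(u,v)` is an edge of the residual network, i.e. `r_f(u,v) = c(u,v) - f(u,v) > 0`. -/
def ResidualEdge {ν : Type} (c : ν → ν → ℝ≥0∞) (f : ν → ν → ℝ) (u v : ν) : Prop :=
  (f u v : EReal) < (c u v : EReal)

open scoped Classical in
/-- The capacity of the `(s,t)`-cut `(S, 𝒱 ∖ S)`. -/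
noncomputable def cutCap {ν : Type} [Fintype ν] (c : ν → ν → ℝ≥0∞) (S : Set ν) : ℝ≥0∞ :=
  ∑ u, ∑ v, if u ∈ S ∧ v ∉ S then c u v else 0

open scoped Classical in
/-- The cut weight of the bipartition `(S, V ∖ S)` of a hypergraph: the total
weight of all nets split by `S`. -/
noncomputable def hypCutWeight {V E : Type} [Fintype E]
    (pins : E → Finset V) (ω : E → ℝ) (S : Set V) : ℝ :=
  ∑ e, if (∃ p ∈ pins e, p ∈ S) ∧ (∃ p ∈ pins e, p ∉ S) then ω e else 0

/- A split net `e` has a pin `p ∈ 𝒮` and a pin `q ∉ 𝒮`. The infinite edges `p → e′` and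
`e″ → q` cannot cross a finite cut, so `e′ ∈ 𝒮` and `e″ ∉ 𝒮`: the bridging edge `(e′, e″)`
crosses the cut and contributes `ω e`. Distinct nets have distinct bridging edges, so these
contributions add up inside the cut capacity. -/

section Cut

variable {ν : Type} [Fintype ν] (c : ν → ν → ℝ≥0∞) (S : Set ν)

open scoped Classical in
theorem sum_le_cutCap_of_injective {ι : Type} [Fintype ι] {u v : ι → ν}
    (huv : Function.Injective fun i ↦ (u i, v i)) :
    ∑ i, (if u i ∈ S ∧ v i ∉ S then c (u i) (v i) else 0) ≤ cutCap c S := by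
  rw [cutCap, ← Fintype.sum_prod_type']
  exact (Finset.sum_map _ ⟨_, huv⟩ fun x ↦ if x.1 ∈ S ∧ x.2 ∉ S then c x.1 x.2 else 0).symm.le
    |>.trans (Finset.sum_le_sum_of_subset (Finset.subset_univ _))

theorem le_cutCap {u v : ν} (hu : u ∈ S) (hv : v ∉ S) : c u v ≤ cutCap c S := by
  classical
  simpa [hu, hv] using
    sum_le_cutCap_of_injective c S (ι := Unit) (u := fun _ ↦ u) (v := fun _ ↦ v) fun _ _ _ ↦ rfl

theorem mem_of_cutCap_ne_top (hS : cutCap c S ≠ ⊤) {u v : ν} (hu : u ∈ S)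
    (huv : c u v = ⊤) : v ∈ S := by
  by_contra hv
  exact hS (top_le_iff.mp (huv ▸ le_cutCap c S hu hv))

end Cut

open scoped Classical in
theorem ofReal_hypCutWeight_le {V E : Type} [Fintype E] (pins : E → Finset V) (ω : E → ℝ)
    (S : Set V) :
    ENNReal.ofReal (hypCutWeight pins ω S) ≤
      ∑ e, if (∃ p ∈ pins e, p ∈ S) ∧ (∃ p ∈ pins e, p ∉ S) then ENNReal.ofReal (ω e) else 0 :=
  (Finset.le_sum_of_subadditive _ ENNReal.ofReal_zero.le (fun _ _ ↦ ENNReal.ofReal_add_le) _ _)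
    |>.trans_eq (by simp only [apply_ite ENNReal.ofReal, ENNReal.ofReal_zero])

theorem lawler_bridge_crosses_of_split {V E : Type} [DecidableEq V] [DecidableEq E] [Fintype V]
    [Fintype E] (pins : E → Finset V) (ω : E → ℝ) {𝒮 : Set (V ⊕ E × Bool)}
    (hfin : cutCap (lawlerCap pins ω) 𝒮 ≠ ⊤) {e : E}
    (hin : ∃ p ∈ pins e, Sum.inl p ∈ 𝒮) (hout : ∃ p ∈ pins e, Sum.inl p ∉ 𝒮) :
    Sum.inr (e, false) ∈ 𝒮 ∧ Sum.inr (e, true) ∉ 𝒮 := by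
  obtain ⟨p, hp, hp𝒮⟩ := hin
  obtain ⟨q, hq, hq𝒮⟩ := hout
  refine ⟨mem_of_cutCap_ne_top _ _ hfin hp𝒮 (by simp [lawlerCap, hp]), fun h ↦ hq𝒮 ?_⟩
  exact mem_of_cutCap_ne_top _ _ hfin h (by simp [lawlerCap, hq])

theorem lawler_cut_cap_ge_hyp_cut_weight_general
    {V E : Type} [Fintype V] [Fintype E] [DecidableEq V] [DecidableEq E]
    (pins : E → Finset V) (ω : E → ℝ)
    (𝒮 : Set (V ⊕ E × Bool))
    (hfin : cutCap (lawlerCap pins ω) 𝒮 ≠ ⊤) :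
    ENNReal.ofReal (hypCutWeight pins ω {v : V | Sum.inl v ∈ 𝒮}) ≤
        cutCap (lawlerCap pins ω) 𝒮 ∧
    ∀ e : E, (∃ p ∈ pins e, Sum.inl p ∈ 𝒮) → (∃ p ∈ pins e, Sum.inl p ∉ 𝒮) →
      Sum.inr (e, false) ∈ 𝒮 ∧ Sum.inr (e, true) ∉ 𝒮 := by
  classical
  have bridge := fun e ↦ lawler_bridge_crosses_of_split pins ω hfin (e := e)
  refine ⟨?_, fun e ↦ bridge e⟩
  calc ENNReal.ofReal (hypCutWeight pins ω {v : V | Sum.inl v ∈ 𝒮})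
      ≤ ∑ e, if (∃ p ∈ pins e, Sum.inl p ∈ 𝒮) ∧ (∃ p ∈ pins e, Sum.inl p ∉ 𝒮)
          then ENNReal.ofReal (ω e) else 0 := ofReal_hypCutWeight_le pins ω _
    _ ≤ ∑ e : E, if Sum.inr (e, false) ∈ 𝒮 ∧ Sum.inr (e, true) ∉ 𝒮
          then lawlerCap pins ω (Sum.inr (e, false)) (Sum.inr (e, true)) else 0 := by
        refine Finset.sum_le_sum fun e _ ↦ ?_
        by_cases hsplit : (∃ p ∈ pins e, Sum.inl p ∈ 𝒮) ∧ (∃ p ∈ pins e, Sum.inl p ∉ 𝒮)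
        · simp [hsplit, bridge e hsplit.1 hsplit.2, lawlerCap]
        · simp [hsplit]
    _ ≤ cutCap (lawlerCap pins ω) 𝒮 :=
        sum_le_cutCap_of_injective _ _ fun e₁ e₂ h ↦ by simpa using congrArg Prod.fst h

/-- Every finite-capacity `(s,t)`-cut `(𝒮, 𝒱 ∖ 𝒮)` of the Lawler
network has capacity at least the cut weight of the bipartition `(𝒮 ∩ V, V ∖ 𝒮)` of the
hypergraph; moreover, for every net `e` split by `𝒮 ∩ V`, the bridging edge `(e′, e″)`
is a cut edge. -/
theorem lawler_cut_cap_ge_hyp_cut_weight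
    {V E : Type} [Fintype V] [Fintype E] [DecidableEq V] [DecidableEq E]
    (pins : E → Finset V) (ω : E → ℝ) (hω : ∀ e, 0 < ω e)
    (s t : V) (hst : s ≠ t)
    (𝒮 : Set (V ⊕ E × Bool)) (hs : Sum.inl s ∈ 𝒮) (ht : Sum.inl t ∉ 𝒮)
    (hfin : cutCap (lawlerCap pins ω) 𝒮 ≠ ⊤) :
    ENNReal.ofReal (hypCutWeight pins ω {v : V | Sum.inl v ∈ 𝒮}) ≤
        cutCap (lawlerCap pins ω) 𝒮 ∧
    ∀ e : E, (∃ p ∈ pins e, Sum.inl p ∈ 𝒮) → (∃ p ∈ pins e, Sum.inl p ∉ 𝒮) →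
      Sum.inr (e, false) ∈ 𝒮 ∧ Sum.inr (e, true) ∉ 𝒮 :=
  lawler_cut_cap_ge_hyp_cut_weight_general pins ω 𝒮 hfin
end

section
/- Let H = (V, E, ω) be a hypergraph with distinct vertices s, t ∈ V, let f be a maximum (s,t)-flow in the Lawler network N_L of H, and define A := {s} ∪ {v ∈ V | ∃ e ∈ E : v ∈ e and the second bridging node e″ of e is reachable from s in the residual network N_f}. Then s ∈ A, t ∉ A, and the bipartition (A, V∖A) is a minimum (s,t)-cut of H: its cut weight Σ{ω(e) : e ∈ E, e ∩ A ≠ ∅ and e ∖ A ≠ ∅} equals the minimum, over all sets S ⊆ V with s ∈ S and t ∉ S, of the cut weight of (S, V∖S). -/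
open scoped ENNReal

/-!
Every vertex set `S` with `s ∈ S`, `t ∉ S` induces a cut of the Lawler network (put `e′` on the
source side iff `e` meets `S`, and `e″` iff `e ⊆ S`) that no infinite edge leaves; its capacity
is the cut weight of `S`, so by weak duality every flow value is at most every cut weight.
For a maximum flow, the set `R` of nodes reachable from `s` in the residual network misses `t`
(otherwise augment along the walk), and every edge leaving `R` is saturated, so the flow value is
the capacity of `R`. Infinite edges are always residual, hence only bridging edges leave `R`, and
every net split by `A` has `e′ ∈ R` and `e″ ∉ R`. So the cut weight of `A` is at most the flow
value, and thus at most every cut weight.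
-/

open Filter Topology

theorem ENNReal.ofReal_le_of_coe_le {x : ℝ} {a : ℝ≥0∞} (h : (x : EReal) ≤ a) :
    ENNReal.ofReal x ≤ a := by
  rw [← EReal.coe_ennreal_le_coe_ennreal_iff, EReal.coe_ennreal_ofReal]
  exact max_le h (EReal.coe_ennreal_nonneg a)

theorem ENNReal.ofReal_eq_of_coe_eq {x : ℝ} {a : ℝ≥0∞} (h : (x : EReal) = a) :
    ENNReal.ofReal x = a := by
  have hx : (0 : EReal) ≤ x := h ▸ EReal.coe_ennreal_nonneg a
  rw [← EReal.coe_ennreal_eq_coe_ennreal_iff, EReal.coe_ennreal_ofReal,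
    max_eq_left (EReal.coe_nonneg.1 hx), h]

theorem EReal.eventually_coe_add_mul_le {x d : ℝ} {a : EReal} (hle : (x : EReal) ≤ a)
    (hlt : 0 < d → (x : EReal) < a) :
    ∀ᶠ ε in 𝓝[>] (0 : ℝ), ((x + ε * d : ℝ) : EReal) ≤ a := by
  rcases le_or_gt d 0 with hd | hd
  · filter_upwards [self_mem_nhdsWithin] with ε (hε : 0 < ε)
    exact le_trans (EReal.coe_le_coe_iff.2 (by nlinarith)) hle
  · have hlim : Tendsto (fun ε : ℝ => ((x + ε * d : ℝ) : EReal)) (𝓝[>] 0) (𝓝 (x : EReal)) :=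
      ((continuous_coe_real_ereal.comp (by fun_prop)).tendsto' 0 _ (by simp)).mono_left
        nhdsWithin_le_nhds
    exact (hlim.eventually_lt_const (hlt hd)).mono fun _ => le_of_lt

/-- The witness is the sum of the unit flows along the steps of the walk; since only the support
of its positive part matters for augmenting, the walk need not be simple. -/
theorem Relation.ReflTransGen.exists_unitFlow {ν : Type} [Fintype ν] [DecidableEq ν]
    {r : ν → ν → Prop} {a b : ν} (h : Relation.ReflTransGen r a b) :
    ∃ δ : ν → ν → ℝ, (∀ u v, δ u v = -δ v u) ∧ (∀ u v, 0 < δ u v → r u v) ∧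
      ∀ u, ∑ v, δ u v = (if u = a then 1 else 0) - (if u = b then 1 else 0) := by
  induction h with
  | refl => exact ⟨0, by simp, by simp, by simp⟩
  | @tail x y _ hxy ih =>
    obtain ⟨δ, hskew, hsupp, hrow⟩ := ih
    refine ⟨fun u v =>
      δ u v + ((if u = x ∧ v = y then 1 else 0) - (if u = y ∧ v = x then 1 else 0)),
      fun u v => ?_, fun u v h => ?_, fun u => ?_⟩
    · beta_reduce
      rw [hskew u v]
      split_ifs <;> first | ring1 | (exfalso; tauto)
    · by_cases hxy' : u = x ∧ v = y
      · obtain ⟨rfl, rfl⟩ := hxy'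
        exact hxy
      · refine hsupp u v ?_
        simp only [hxy', if_false] at h
        split_ifs at h <;> linarith
    · simp only [Finset.sum_add_distrib, Finset.sum_sub_distrib, hrow, ite_and, Finset.sum_ite_eq',
        Finset.mem_univ, if_true, Finset.sum_ite_irrel, Finset.sum_const_zero]
      split_ifs <;> ring

namespace IsFlow

variable {ν : Type} [Fintype ν] {c : ν → ν → ℝ≥0∞} {s t : ν} {f : ν → ν → ℝ}

open scoped Classical in
theorem flowValue_eq_sum_cut (hf : IsFlow c s t f) {S : Set ν} (hs : s ∈ S) (ht : t ∉ S) :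
    flowValue f s = ∑ u, ∑ v, if u ∈ S ∧ v ∉ S then f u v else 0 := by
  obtain ⟨-, hskew, hcons⟩ := hf
  set In := Finset.univ.filter (· ∈ S)
  have hout : ∑ u ∈ In, ∑ v, f u v = flowValue f s :=
    Finset.sum_eq_single_of_mem s (by simpa [In]) fun u hu hus =>
      hcons u hus fun hut => ht (by simpa [In, hut] using hu)
  have hinside : ∑ u ∈ In, ∑ v ∈ In, f u v = 0 := by
    have : ∑ u ∈ In, ∑ v ∈ In, f u v = -∑ u ∈ In, ∑ v ∈ In, f u v := by
      conv_lhs => rw [Finset.sum_comm]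
      simp only [← Finset.sum_neg_distrib]
      exact Finset.sum_congr rfl fun u _ => Finset.sum_congr rfl fun v _ => hskew v u
    linarith
  calc flowValue f s = ∑ u ∈ In, ∑ v, f u v := hout.symm
    _ = ∑ u ∈ In, (∑ v ∈ In, f u v + ∑ v with v ∉ S, f u v) := by
      simp only [In, Finset.sum_filter_add_sum_filter_not]
    _ = ∑ u ∈ In, ∑ v with v ∉ S, f u v := by rw [Finset.sum_add_distrib, hinside, zero_add]
    _ = _ := by
      simp only [In, Finset.sum_filter, ite_and, Finset.sum_ite_irrel, Finset.sum_const_zero]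

theorem ofReal_flowValue_le_cutCap (hf : IsFlow c s t f) {S : Set ν} (hs : s ∈ S) (ht : t ∉ S) :
    ENNReal.ofReal (flowValue f s) ≤ cutCap c S := by
  have hsub (g : ν → ℝ) : ENNReal.ofReal (∑ v, g v) ≤ ∑ v, ENNReal.ofReal (g v) :=
    Finset.le_sum_of_subadditive _ ENNReal.ofReal_zero.le (fun _ _ => ENNReal.ofReal_add_le) _ _
  rw [hf.flowValue_eq_sum_cut hs ht, cutCap]
  refine (hsub _).trans (Finset.sum_le_sum fun u _ => (hsub _).trans
    (Finset.sum_le_sum fun v _ => ?_))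
  split_ifs
  · exact ENNReal.ofReal_le_of_coe_le (hf.1 u v)
  · simp

open scoped Classical in
theorem cutCap_eq_ofReal_flowValue (hf : IsFlow c s t f) {S : Set ν} (hs : s ∈ S) (ht : t ∉ S)
    (hS : ∀ u v, u ∈ S → ResidualEdge c f u v → v ∈ S) :
    cutCap c S = ENNReal.ofReal (flowValue f s) := by
  have hsat : ∀ u v, u ∈ S → v ∉ S → (f u v : EReal) = c u v := fun u v hu hv =>
    le_antisymm (hf.1 u v) (not_lt.1 fun h => hv (hS u v hu h))
  have hnonneg : ∀ u v, 0 ≤ if u ∈ S ∧ v ∉ S then f u v else 0 := by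
    intro u v
    split_ifs with h
    exacts [EReal.coe_nonneg.1 ((hsat u v h.1 h.2).symm ▸ EReal.coe_ennreal_nonneg _), le_rfl]
  rw [hf.flowValue_eq_sum_cut hs ht, cutCap,
    ENNReal.ofReal_sum_of_nonneg fun u _ => Finset.sum_nonneg fun v _ => hnonneg u v]
  refine Finset.sum_congr rfl fun u _ => ?_
  rw [ENNReal.ofReal_sum_of_nonneg fun v _ => hnonneg u v]
  refine Finset.sum_congr rfl fun v _ => ?_
  split_ifs with h
  · exact (ENNReal.ofReal_eq_of_coe_eq (hsat u v h.1 h.2)).symm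
  · simp

end IsFlow

theorem IsMaxFlow.not_reachable {ν : Type} [Fintype ν] {c : ν → ν → ℝ≥0∞} {s t : ν}
    {f : ν → ν → ℝ} (hf : IsMaxFlow c s t f) (hst : s ≠ t) :
    ¬ Relation.ReflTransGen (ResidualEdge c f) s t := by
  classical
  obtain ⟨⟨hcap, hskew, hcons⟩, hmax⟩ := hf
  intro hreach
  obtain ⟨δ, hδskew, hδres, hδrow⟩ := hreach.exists_unitFlow
  obtain ⟨ε, hcap', hε⟩ : ∃ ε : ℝ, (∀ u v, ((f u v + ε * δ u v : ℝ) : EReal) ≤ c u v) ∧ 0 < ε :=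
    ((Filter.eventually_all.2 fun u => Filter.eventually_all.2 fun v =>
      EReal.eventually_coe_add_mul_le (hcap u v) (hδres u v)).and self_mem_nhdsWithin).exists
  have hrow : ∀ u, ∑ v, (f u v + ε * δ u v) =
      ∑ v, f u v + ε * ((if u = s then 1 else 0) - (if u = t then 1 else 0)) := by
    intro u
    rw [Finset.sum_add_distrib, ← Finset.mul_sum, hδrow]
  have hflow : IsFlow c s t fun u v => f u v + ε * δ u v :=
    ⟨hcap', fun u v => by beta_reduce; rw [hskew u v, hδskew u v]; ring,
      fun u hus hut => by rw [hrow, hcons u hus hut, if_neg hus, if_neg hut]; ring⟩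
  have := hmax _ hflow
  rw [flowValue, flowValue, hrow, if_pos rfl, if_neg hst] at this
  linarith

def lawlerCutSet {V E : Type} (pins : E → Finset V) (S : Set V) : Set (V ⊕ E × Bool)
  | .inl v => v ∈ S
  | .inr (e, false) => ∃ p ∈ pins e, p ∈ S
  | .inr (e, true) => ∀ p ∈ pins e, p ∈ S

section lawlerCutSet

variable {V E : Type} {pins : E → Finset V} {S : Set V}

@[simp] theorem inl_mem_lawlerCutSet {v : V} : Sum.inl v ∈ lawlerCutSet pins S ↔ v ∈ S := Iff.rfl

@[simp] theorem inr_false_mem_lawlerCutSet {e : E} :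
    Sum.inr (e, false) ∈ lawlerCutSet pins S ↔ ∃ p ∈ pins e, p ∈ S := Iff.rfl

@[simp] theorem inr_true_mem_lawlerCutSet {e : E} :
    Sum.inr (e, true) ∈ lawlerCutSet pins S ↔ ∀ p ∈ pins e, p ∈ S := Iff.rfl

end lawlerCutSet

theorem residualEdge_of_eq_top {ν : Type} {c : ν → ν → ℝ≥0∞} {f : ν → ν → ℝ} {u v : ν}
    (h : c u v = ⊤) : ResidualEdge c f u v := by
  rw [ResidualEdge, h, EReal.coe_ennreal_top]
  exact EReal.coe_lt_top _

theorem hypCutWeight_nonneg {V E : Type} [Fintype E] {pins : E → Finset V} {ω : E → ℝ}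
    (hω : ∀ e, 0 ≤ ω e) (S : Set V) : 0 ≤ hypCutWeight pins ω S :=
  Finset.sum_nonneg fun e _ => by split_ifs; exacts [hω e, le_rfl]

section Lawler

variable {V E : Type} [Fintype V] [Fintype E] [DecidableEq V] [DecidableEq E]
  {pins : E → Finset V} {ω : E → ℝ}

open scoped Classical in
theorem cutCap_lawlerCap {T : Set (V ⊕ E × Bool)}
    (hT : ∀ u v, u ∈ T → v ∉ T → lawlerCap pins ω u v ≠ ⊤) :
    cutCap (lawlerCap pins ω) T =
      ∑ e, if Sum.inr (e, false) ∈ T ∧ Sum.inr (e, true) ∉ T then ENNReal.ofReal (ω e) else 0 := by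
  have hpin : ∀ u v, (lawlerCap pins ω u v = ⊤ ∨ lawlerCap pins ω u v = 0) →
      (if u ∈ T ∧ v ∉ T then lawlerCap pins ω u v else 0) = 0 := by
    rintro u v (h | h)
    · exact if_neg fun huv => hT u v huv.1 huv.2 h
    · simp [h]
  have hin : ∀ p e, (if Sum.inl p ∈ T ∧ Sum.inr (e, false) ∉ T then
      lawlerCap pins ω (Sum.inl p) (Sum.inr (e, false)) else 0) = 0 := fun p e =>
    hpin _ _ (by simp only [lawlerCap]; split_ifs <;> simp)
  have hout : ∀ e p, (if Sum.inr (e, true) ∈ T ∧ Sum.inl p ∉ T then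
      lawlerCap pins ω (Sum.inr (e, true)) (Sum.inl p) else 0) = 0 := fun e p =>
    hpin _ _ (by simp only [lawlerCap]; split_ifs <;> simp)
  simp only [cutCap, Fintype.sum_sum_type, Fintype.sum_prod_type, Fintype.sum_bool, hin, hout]
  simp only [lawlerCap, ite_self, Finset.sum_const_zero, add_zero, zero_add]
  refine Finset.sum_congr rfl fun e _ => ?_
  rw [Finset.sum_eq_single e (fun e' _ he' => by simp [Ne.symm he']) (by simp), if_pos rfl]

theorem cutCap_lawlerCutSet (hω : ∀ e, 0 ≤ ω e) (S : Set V) :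
    cutCap (lawlerCap pins ω) (lawlerCutSet pins S) = ENNReal.ofReal (hypCutWeight pins ω S) := by
  have hT : ∀ u v, u ∈ lawlerCutSet pins S → v ∉ lawlerCutSet pins S →
      lawlerCap pins ω u v ≠ ⊤ := by
    rintro (p | ⟨e, _ | _⟩) (q | ⟨e', _ | _⟩) hu hv <;> simp only [lawlerCap] <;>
      (try split_ifs) <;> simp_all
  rw [cutCap_lawlerCap hT, hypCutWeight,
    ENNReal.ofReal_sum_of_nonneg fun e _ => by split_ifs; exacts [hω e, le_rfl]]
  refine Finset.sum_congr rfl fun e _ => ?_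
  classical
  simp only [inr_false_mem_lawlerCutSet, inr_true_mem_lawlerCutSet, not_forall, exists_prop,
    apply_ite ENNReal.ofReal, ENNReal.ofReal_zero]

theorem ofReal_hypCutWeight_le_cutCap (hω : ∀ e, 0 ≤ ω e) {R : Set (V ⊕ E × Bool)}
    (hR : ∀ u v, u ∈ R → lawlerCap pins ω u v = ⊤ → v ∈ R) {A : Set V}
    (hAR : ∀ v ∈ A, Sum.inl v ∈ R) (hRA : ∀ e, Sum.inr (e, true) ∈ R → ∀ v ∈ pins e, v ∈ A) :
    ENNReal.ofReal (hypCutWeight pins ω A) ≤ cutCap (lawlerCap pins ω) R := by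
  have hcross : ∀ e, (∃ p ∈ pins e, p ∈ A) → (∃ q ∈ pins e, q ∉ A) →
      Sum.inr (e, false) ∈ R ∧ Sum.inr (e, true) ∉ R := by
    rintro e ⟨p, hp, hpA⟩ ⟨q, hq, hqA⟩
    exact ⟨hR _ _ (hAR p hpA) (by simp [lawlerCap, hp]), fun he => hqA (hRA e he q hq)⟩
  rw [cutCap_lawlerCap fun u v hu hv htop => hv (hR u v hu htop), hypCutWeight,
    ENNReal.ofReal_sum_of_nonneg fun e _ => by split_ifs; exacts [hω e, le_rfl]]
  refine Finset.sum_le_sum fun e _ => ?_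
  split_ifs with hsplit hcut
  · rfl
  · exact absurd (hcross e hsplit.1 hsplit.2) hcut
  all_goals simp

end Lawler

/-- Let `f` be a maximum `(s,t)`-flow in the Lawler network and let
`A := {s} ∪ {v ∈ V | ∃ e ∋ v with e″ reachable from s in the residual network}`. Then
`s ∈ A`, `t ∉ A`, and `(A, V ∖ A)` is a minimum `(s,t)`-cut of the hypergraph: its cut
weight equals the minimum cut weight over all bipartitions `(S, V ∖ S)` with `s ∈ S`
and `t ∉ S`. -/
theorem lawler_reachable_bridges_give_min_cut
    {V E : Type} [Fintype V] [Fintype E] [DecidableEq V] [DecidableEq E]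
    (pins : E → Finset V) (ω : E → ℝ) (hω : ∀ e, 0 < ω e)
    (s t : V) (hst : s ≠ t)
    (f : V ⊕ E × Bool → V ⊕ E × Bool → ℝ)
    (hf : IsMaxFlow (lawlerCap pins ω) (Sum.inl s) (Sum.inl t) f)
    (A : Set V)
    (hA : A = insert s {v : V | ∃ e : E, v ∈ pins e ∧
      Relation.ReflTransGen (ResidualEdge (lawlerCap pins ω) f)
        (Sum.inl s) (Sum.inr (e, true))}) :
    s ∈ A ∧ t ∉ A ∧
    (∀ S : Set V, s ∈ S → t ∉ S →
      hypCutWeight pins ω A ≤ hypCutWeight pins ω S) ∧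
    hypCutWeight pins ω A =
      sInf {x : ℝ | ∃ S : Set V, s ∈ S ∧ t ∉ S ∧ hypCutWeight pins ω S = x} := by
  set R := {x | Relation.ReflTransGen (ResidualEdge (lawlerCap pins ω) f) (Sum.inl s) x}
  have hR_top : ∀ u v, u ∈ R → lawlerCap pins ω u v = ⊤ → v ∈ R :=
    fun _ _ hu huv => hu.tail (residualEdge_of_eq_top huv)
  have htR : Sum.inl t ∉ R := hf.not_reachable (Sum.inl_injective.ne hst)
  have hAR : ∀ v ∈ A, Sum.inl v ∈ R := by
    subst hA
    rintro v (rfl | ⟨e, hve, he⟩)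
    exacts [.refl, hR_top _ _ he (by simp [lawlerCap, hve])]
  have hRA : ∀ e, Sum.inr (e, true) ∈ R → ∀ v ∈ pins e, v ∈ A :=
    fun e he v hv => hA ▸ Or.inr ⟨e, hv, he⟩
  have hsA : s ∈ A := hA ▸ Set.mem_insert s _
  have htA : t ∉ A := fun ht => htR (hAR t ht)
  have hω' : ∀ e, 0 ≤ ω e := fun e => (hω e).le
  have hmin : ∀ S : Set V, s ∈ S → t ∉ S → hypCutWeight pins ω A ≤ hypCutWeight pins ω S := by
    intro S hs ht
    refine (ENNReal.ofReal_le_ofReal_iff (hypCutWeight_nonneg hω' S)).1 ?_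
    calc ENNReal.ofReal (hypCutWeight pins ω A)
        ≤ cutCap (lawlerCap pins ω) R := ofReal_hypCutWeight_le_cutCap hω' hR_top hAR hRA
      _ = ENNReal.ofReal (flowValue f (Sum.inl s)) :=
        hf.1.cutCap_eq_ofReal_flowValue .refl htR fun _ _ hu => hu.tail
      _ ≤ cutCap (lawlerCap pins ω) (lawlerCutSet pins S) := hf.1.ofReal_flowValue_le_cutCap hs ht
      _ = ENNReal.ofReal (hypCutWeight pins ω S) := cutCap_lawlerCutSet hω' S
  refine ⟨hsA, htA, hmin, Eq.symm (IsLeast.csInf_eq ⟨⟨A, hsA, htA, rfl⟩, ?_⟩)⟩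
  rintro _ ⟨S, hs, ht, rfl⟩
  exact hmin S hs ht
end
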